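/- Define φ̂(t) = (t² + 1/4) / (cosh(2πt) Γ(−1/4 + it) Γ(−1/4 − it) Γ(6 + it) Γ(6 − it)). Then φ̂(t) > 0 for all real t, and the limit as t → ± i/4 along the imaginary axis equals 3 / (64 π^{3/2} Γ(23/4) Γ(25/4)). -/

import Mathlib

/-!
For real `t` the Gamma factors come in conjugate pairs, `Γ(a + it) Γ(a - it) = |Γ(a + it)|²`,
so `φ̂(t)` is a quotient of positive reals.

At `t = i/4` the zero of `cosh(2πt)` cancels the pole of `Γ(s)` at `s = -1/4 - it = 0`:
since `cosh(2πt) = -sin(2πs)`, the reflection formula `Γ(s) Γ(1 - s) = π / sin(πs)` gives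
`Γ(s) sin(2πs) = 2π cos(πs) / Γ(1 - s)` for non-integral `s`, which turns `φ̂` near `i/4` into an
expression continuous at `i/4`. Its value there is computed from `Γ(-1/2) = -2√π`.
Finally `φ̂` is even, which gives the limit at `-i/4`.
-/

open Complex Filter

/-- The test function transform `φ̂`. -/
noncomputable def phiHat (t : ℂ) : ℂ :=
  (t ^ 2 + 1 / 4) /
    (Complex.cosh (2 * Real.pi * t) * Complex.Gamma (-1 / 4 + I * t) *
      Complex.Gamma (-1 / 4 - I * t) * Complex.Gamma (6 + I * t) * Complex.Gamma (6 - I * t))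

open scoped Real ComplexConjugate Topology

lemma Real.ne_neg_natCast_of_pos {x : ℝ} (hx : 0 < x) (m : ℕ) : x ≠ -m := by
  linarith [m.cast_nonneg (α := ℝ)]

lemma Real.ne_neg_natCast_of_neg_one_lt_of_neg {x : ℝ} (h₁ : -1 < x) (h₂ : x < 0) (m : ℕ) :
    x ≠ -m := by
  rintro rfl
  rcases m with _ | m
  · simp at h₂
  · push_cast at h₁
    linarith [m.cast_nonneg (α := ℝ)]

namespace Complex

lemma ne_neg_natCast_of_re {z : ℂ} (h : ∀ m : ℕ, z.re ≠ -m) (m : ℕ) : z ≠ -m :=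
  fun hm => h m (by simp [hm])

lemma ne_intCast_of_norm_lt_one {s : ℂ} (h₀ : s ≠ 0) (h₁ : ‖s‖ < 1) (n : ℤ) : s ≠ n := by
  rintro rfl
  rw [norm_intCast, ← Int.cast_abs, ← Int.cast_one, Int.cast_lt, Int.abs_lt_one_iff] at h₁
  exact h₀ (by simp [h₁])

lemma I_mul_I_div_four : I * (I / 4) = -1 / 4 := by
  linear_combination I_mul_I / 4

lemma Gamma_add_I_mul_mul_Gamma_sub_I_mul (a t : ℝ) :
    Gamma (a + I * t) * Gamma (a - I * t) = normSq (Gamma (a + I * t)) := by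
  rw [show (a - I * t : ℂ) = conj (a + I * t) by simp [sub_eq_add_neg], Gamma_conj, mul_conj]

lemma Gamma_mul_sin_two_pi_mul {s : ℂ} (hs : ∀ n : ℤ, s ≠ n) :
    Gamma s * sin (2 * π * s) = 2 * π * cos (π * s) / Gamma (1 - s) := by
  have hsin : sin (π * s) ≠ 0 := by
    rw [Ne, sin_eq_zero_iff]
    rintro ⟨k, hk⟩
    exact hs k (mul_left_cancel₀ (ofReal_ne_zero.mpr Real.pi_ne_zero) (by rw [hk]; ring))
  have hΓ : Gamma (1 - s) ≠ 0 :=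
    Gamma_ne_zero fun m hm => hs (m + 1) (by push_cast; linear_combination -hm)
  have hrefl := Gamma_mul_Gamma_one_sub s
  rw [eq_div_iff hsin] at hrefl
  rw [eq_div_iff hΓ, mul_assoc 2, sin_two_mul]
  linear_combination 2 * cos (π * s) * hrefl

lemma Gamma_neg_one_half : Gamma (-(1 / 2)) = -2 * √π := by
  have h := Gamma_add_one (-(1 / 2) : ℂ) (by norm_num)
  rw [show (-(1 / 2) : ℂ) + 1 = ((1 / 2 : ℝ) : ℂ) by push_cast; ring, Gamma_ofReal,
    Real.Gamma_one_half_eq] at h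
  linear_combination 2 * h

end Complex

lemma phiHat_ofReal (t : ℝ) : phiHat t = ((t ^ 2 + 1 / 4) / (Real.cosh (2 * π * t) *
    normSq (Gamma (-1 / 4 + I * t)) * normSq (Gamma (6 + I * t))) : ℝ) := by
  have h₁ := Gamma_add_I_mul_mul_Gamma_sub_I_mul (-1 / 4) t
  have h₂ := Gamma_add_I_mul_mul_Gamma_sub_I_mul 6 t
  push_cast at h₁ h₂ ⊢
  rw [phiHat, ← h₁, ← h₂]
  ring

lemma exists_pos_phiHat_ofReal_eq (t : ℝ) : ∃ r : ℝ, 0 < r ∧ phiHat t = r := by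
  refine ⟨_, ?_, phiHat_ofReal t⟩
  have hΓ₁ : Gamma (-1 / 4 + I * t) ≠ 0 := Gamma_ne_zero <| ne_neg_natCast_of_re <|
    Real.ne_neg_natCast_of_neg_one_lt_of_neg (by norm_num) (by norm_num)
  have hΓ₂ : Gamma (6 + I * t) ≠ 0 := Gamma_ne_zero_of_re_pos (by simp)
  have := normSq_pos.mpr hΓ₁
  have := normSq_pos.mpr hΓ₂
  have := Real.cosh_pos (2 * π * t)
  positivity

lemma phiHat_neg (t : ℂ) : phiHat (-t) = phiHat t := by
  simp only [phiHat, mul_neg, cosh_neg, neg_sq, sub_neg_eq_add, ← sub_eq_add_neg]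
  ring

/-- `φ̂` with `cosh(2πt) Γ(s)`, `s = -1/4 - it`, replaced by `-2π cos(πs) / Γ(1 - s)`. -/
noncomputable def phiHatReg (t : ℂ) : ℂ :=
  -(t ^ 2 + 1 / 4) * Gamma (5 / 4 + I * t) /
    (2 * π * cos (π * (-1 / 4 - I * t)) * Gamma (-1 / 4 + I * t) * Gamma (6 + I * t) *
      Gamma (6 - I * t))

lemma phiHat_eq_phiHatReg {t : ℂ} (ht : ∀ n : ℤ, -1 / 4 - I * t ≠ n) :
    phiHat t = phiHatReg t := by
  have hcosh : cosh (2 * π * t) = -sin (2 * π * (-1 / 4 - I * t)) := by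
    rw [show 2 * π * (-1 / 4 - I * t) = -(2 * π * t * I + π / 2) by ring, sin_neg,
      sin_add_pi_div_two, cos_mul_I, neg_neg]
  have hkey := Gamma_mul_sin_two_pi_mul ht
  rw [show 1 - (-1 / 4 - I * t) = 5 / 4 + I * t by ring] at hkey
  have hregroup (a b c d e : ℂ) : -a * b * c * d * e = -(c * a) * (b * d * e) := by ring
  rw [phiHat, phiHatReg, hcosh, hregroup, hkey, neg_mul, div_mul_eq_mul_div, div_neg,
    div_div_eq_mul_div]
  ring

lemma phiHatReg_I_div_four : phiHatReg (I / 4) =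
    ((3 / (64 * π ^ ((3 : ℝ) / 2) * Real.Gamma (23 / 4) * Real.Gamma (25 / 4)) : ℝ) : ℂ) := by
  have hpow : π ^ ((3 : ℝ) / 2) = π * √π := by
    rw [show (3 : ℝ) / 2 = 1 + 1 / 2 by norm_num, Real.rpow_add Real.pi_pos, Real.rpow_one,
      ← Real.sqrt_eq_rpow]
  rw [phiHatReg, I_mul_I_div_four]
  norm_num [Gamma_neg_one_half, div_pow]
  push_cast [hpow, ← Gamma_ofReal]
  ring

lemma continuousAt_phiHatReg : ContinuousAt phiHatReg (I / 4) := by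
  have hΓ {f : ℂ → ℂ} (hf : Continuous f) (h : ∀ m : ℕ, (f (I / 4)).re ≠ -m) :
      ContinuousAt (fun t => Gamma (f t)) (I / 4) :=
    (continuousAt_Gamma _ (ne_neg_natCast_of_re h)).comp hf.continuousAt
  have hden : 2 * π * cos (π * (-1 / 4 - I * (I / 4))) * Gamma (-1 / 4 + I * (I / 4)) *
      Gamma (6 + I * (I / 4)) * Gamma (6 - I * (I / 4)) ≠ 0 := by
    rw [I_mul_I_div_four]
    norm_num [Gamma_neg_one_half, Real.pi_ne_zero]
    exact ⟨⟨Real.sqrt_ne_zero'.mpr Real.pi_pos, Gamma_ne_zero_of_re_pos (by norm_num)⟩,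
      Gamma_ne_zero_of_re_pos (by norm_num)⟩
  refine ContinuousAt.div ?_ ?_ hden
  · refine (by fun_prop : Continuous fun t : ℂ => -(t ^ 2 + 1 / 4)).continuousAt.mul
      (hΓ (by fun_prop) (Real.ne_neg_natCast_of_pos ?_))
    norm_num [I_mul_I_div_four]
  · have hcos : Continuous fun t : ℂ => 2 * π * cos (π * (-1 / 4 - I * t)) := by fun_prop
    refine ((hcos.continuousAt.mul
      (hΓ (by fun_prop) (Real.ne_neg_natCast_of_neg_one_lt_of_neg ?_ ?_))).mul
      (hΓ (by fun_prop) (Real.ne_neg_natCast_of_pos ?_))).mul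
      (hΓ (by fun_prop) (Real.ne_neg_natCast_of_pos ?_)) <;> norm_num [I_mul_I_div_four]

lemma tendsto_phiHat_I_div_four : Tendsto phiHat (𝓝[≠] (I / 4))
    (𝓝 ((3 / (64 * π ^ ((3 : ℝ) / 2) * Real.Gamma (23 / 4) * Real.Gamma (25 / 4)) : ℝ) : ℂ)) := by
  rw [← phiHatReg_I_div_four]
  refine (continuousAt_phiHatReg.tendsto.mono_left nhdsWithin_le_nhds).congr' ?_
  filter_upwards [self_mem_nhdsWithin, nhdsWithin_le_nhds (Metric.ball_mem_nhds (I / 4) one_pos)]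
    with t (hne : t ≠ I / 4) hball
  have hs : -1 / 4 - I * t = -I * (t - I / 4) := by linear_combination -I_mul_I / 4
  refine (phiHat_eq_phiHatReg (ne_intCast_of_norm_lt_one ?_ ?_)).symm
  · rw [hs]
    exact mul_ne_zero (neg_ne_zero.mpr I_ne_zero) (sub_ne_zero.mpr hne)
  · rwa [hs, norm_mul, norm_neg, norm_I, one_mul, ← dist_eq]

theorem phiHat_pos_and_limit :
    (∀ t : ℝ, ∃ r : ℝ, 0 < r ∧ phiHat (t : ℂ) = (r : ℂ)) ∧
    Tendsto phiHat (nhdsWithin (I / 4) {z | z ≠ I / 4})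
      (nhds ((3 / (64 * Real.pi ^ ((3 : ℝ) / 2) * Real.Gamma (23 / 4) * Real.Gamma (25 / 4)) : ℝ) : ℂ)) ∧
    Tendsto phiHat (nhdsWithin (-(I / 4)) {z | z ≠ -(I / 4)})
      (nhds ((3 / (64 * Real.pi ^ ((3 : ℝ) / 2) * Real.Gamma (23 / 4) * Real.Gamma (25 / 4)) : ℝ) : ℂ)) := by
  refine ⟨exists_pos_phiHat_ofReal_eq, tendsto_phiHat_I_div_four, ?_⟩
  have hneg : Tendsto Neg.neg (𝓝[≠] (-(I / 4))) (𝓝[≠] (I / 4)) := by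
    have h := (Homeomorph.neg ℂ).map_punctured_nhds_eq (-(I / 4))
    rw [Homeomorph.coe_neg, neg_neg] at h
    exact h.le
  exact (tendsto_phiHat_I_div_four.comp hneg).congr phiHat_neg
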